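/- Safety preservation (belief-dependent case): if the safety labeling L_safe of an HIG state depends only on the belief component u, then a proper HIG execution ϱ satisfies the invariant 'always safe' if and only if every Player-2 state in the similar DAG execution ϱ̂ is safe. -/

import Mathlib

inductive Player | P1 | P2 | Prob
deriving DecidableEq

structure HIGState (T U : Type*) where
  t : T
  u : U
  Ω : Set T
  γ : Player

structure DAGState (T U A₂ : Type*) where
  t : T
  u : U
  w : List A₂
  j : ℕ
  γ : Player

theorem List.forall_mem_iff_of_map_eq {α β γ : Type*} {l₁ : List α} {l₂ : List β}
    {f : α → γ} {g : β → γ} (h : l₁.map f = l₂.map g) (P : γ → Prop) :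
    (∀ a ∈ l₁, P (f a)) ↔ ∀ b ∈ l₂, P (g b) := by
  rw [← List.forall_mem_map, h, List.forall_mem_map]

/-- Safety preservation (belief-dependent case): if the safety labelings of HIG and
DAG states factor through the belief via a common predicate `Q`, and the sequence of
beliefs visited at Player-2 states of the similar DAG execution equals the sequence
of beliefs visited in the HIG execution, then the HIG execution is always safe iff
every Player-2 state of the DAG execution is safe. -/
theorem safety_preservation_belief {T U A₂ : Type*}
    (Q : U → Prop)
    (Lsafe : HIGState T U → Prop) (LsafeD : DAGState T U A₂ → Prop)
    (hL : ∀ s, Lsafe s ↔ Q s.u) (hLD : ∀ s, LsafeD s ↔ Q s.u)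
    (rho : List (HIGState T U)) (rhoD : List (DAGState T U A₂))
    (hbel : rho.map (fun s => s.u)
      = (rhoD.filter (fun s => decide (s.γ = Player.P2))).map (fun s => s.u)) :
    (∀ s ∈ rho, Lsafe s) ↔ (∀ s ∈ rhoD, s.γ = Player.P2 → LsafeD s) := by
  simp only [hL, hLD]
  rw [List.forall_mem_iff_of_map_eq hbel Q, List.forall_mem_filter]
  simp only [decide_eq_true_eq]
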